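/- Assume T(0,y) = 0 for all y ∈ W and the local stability assumption. Suppose there exist ε > 0 with U(ε) ⊆ O, a constant γ ∈ (0,1), and a Lyapunov measure μ̄, i.e., a finite positive Borel measure on X \ U(ε) with [P₁ μ̄](B) ≤ γ μ̄(B) for every Borel B ⊆ X \ U(ε). Then the equilibrium x = 0 is almost everywhere almost surely stable with respect to every finite Borel measure m on X that is absolutely continuous with respect to μ̄ on X \ U(ε) (i.e., m(B) = 0 whenever B ⊆ X \ U(ε) is Borel with μ̄(B) = 0). -/

import Mathlib

/-!
Put `S = X \ U(ε)` and let `stayProb n x` be the probability that the trajectory from `x` stays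
in `S` at times `0, …, n`. Conditioning on the first step,
`stayProb (n + 1) = 1_S · ∫ stayProb n (T · w) dv(w)`, which is dual to `P₁`; hence
`∫ stayProb n dμ̄ = (P₁ⁿ μ̄)(S) ≤ γⁿ μ̄(S) → 0`. A trajectory in `X` that leaves `S` enters
`U(ε) ⊆ O`, from where it converges almost surely by the Markov property, so on `X` the
probability of non-convergence is at most `stayProb n` for every `n`. It therefore vanishes
`μ̄`-a.e. on `X`, hence `m`-a.e. on `S` by absolute continuity, and identically on `U(ε)`.
-/

open MeasureTheory Filter Metric Set

noncomputable section

/-- The restriction `P₁` of the Perron–Frobenius operator to a set `S` (= `X \ U(ε)`):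
`[P₁ μ](B) = ∫_S ∫_W χ_B(T(x,y)) dv(y) dμ(x)`, with the output measure restricted to `S`. -/
def P1 {α Wsp : Type*} [MeasurableSpace α] [MeasurableSpace Wsp]
    (T : α → Wsp → α) (v : Measure Wsp) (S : Set α) (μ : Measure α) : Measure α :=
  ((μ.restrict S).bind fun x => v.map (T x)).restrict S

/-- The random trajectory `x_{n+1} = T(x_n, y_n)` starting from `x`. -/
def traj {α Wsp : Type*} (T : α → Wsp → α) (x : α) (y : ℕ → Wsp) : ℕ → α
  | 0 => x
  | n + 1 => T (traj T x y n) (y n)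

open ProbabilityTheory Measure Topology
open scoped ENNReal

section HeadTail

variable {W : Type*} [MeasurableSpace W] (v : Measure W) [IsProbabilityMeasure v]

theorem eq_infinitePi_of_prefix {ν : Measure (ℕ → W)}
    (hν : ∀ (n : ℕ) (f : Fin n → Set W), (∀ i, MeasurableSet (f i)) →
      ν {y : ℕ → W | ∀ i : Fin n, y (i : ℕ) ∈ f i} = ∏ i, v (f i)) :
    ν = infinitePi fun _ => v := by
  refine eq_infinitePi _ fun s t ht => ?_
  obtain ⟨n, hsn⟩ : ∃ n, s ⊆ Finset.range n := ⟨s.sup id + 1, fun i hi =>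
    Finset.mem_range.2 (Nat.lt_succ_of_le (Finset.le_sup (f := id) hi))⟩
  have hpi : Set.pi s t = {y : ℕ → W | ∀ i : Fin n, y i ∈ if (i : ℕ) ∈ s then t i else univ} := by
    ext y
    simp only [Set.mem_pi, Finset.mem_coe, mem_ofPred_eq]
    refine ⟨fun h i => ?_, fun h i hi => ?_⟩
    · split_ifs with hi
      exacts [h i hi, mem_univ _]
    · simpa [hi] using h ⟨i, Finset.mem_range.1 (hsn hi)⟩
  rw [hpi, hν n _ fun i => by split_ifs; exacts [ht i, .univ]]
  rw [Fin.prod_univ_eq_prod_range (fun i => v (if i ∈ s then t i else univ))]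
  simp only [apply_ite v, measure_univ]
  rw [Finset.prod_ite_mem, Finset.inter_eq_right.2 hsn]

theorem indepFun_head_tail :
    IndepFun (fun y : ℕ → W => y 0) (fun y n => y (n + 1)) (infinitePi fun _ => v) := by
  have hind := (iIndepFun_iff_iIndep _ _ _).1
    (iIndepFun_infinitePi (P := fun _ : ℕ => v) (X := fun _ w => w) fun _ => measurable_id)
  have h := indep_iSup_of_disjoint (fun i => (measurable_pi_apply i).comap_le) hind
    (Set.disjoint_singleton_left.2 (lt_irrefl 0) : Disjoint {0} (Ioi 0))
  rw [IndepFun_iff_Indep]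
  refine indep_of_indep_of_le_right (indep_of_indep_of_le_left h ?_) ?_
  · exact le_iSup₂_of_le (f := fun i (_ : i ∈ ({0} : Set ℕ)) => _) 0 rfl le_rfl
  · refine Measurable.comap_le (@measurable_pi_iff _ _ _ (⨆ i ∈ Ioi 0, _) _ _ |>.2 fun n => ?_)
    exact (comap_measurable _).mono (le_iSup₂_of_le (f := fun i (_ : i ∈ Ioi 0) => _) (n + 1)
      (Nat.succ_pos n) le_rfl) le_rfl

theorem infinitePi_map_head_tail :
    (infinitePi fun _ : ℕ => v).map (fun y => (y 0, fun n => y (n + 1))) =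
      v.prod (infinitePi fun _ => v) := by
  rw [(indepFun_iff_map_prod_eq_prod_map_map (measurable_pi_apply 0).aemeasurable
    (measurable_pi_lambda _ fun n => measurable_pi_apply (n + 1)).aemeasurable).1
    (indepFun_head_tail v), infinitePi_map_eval,
    map_infinitePi_infinitePi_of_inj (f := Nat.succ) Nat.succ_injective]

theorem infinitePi_preimage_head_tail {E : Set (W × (ℕ → W))} (hE : MeasurableSet E) :
    infinitePi (fun _ => v) {y | (y 0, fun n => y (n + 1)) ∈ E} =
      ∫⁻ w, infinitePi (fun _ => v) {t | (w, t) ∈ E} ∂v := by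
  change infinitePi (fun _ => v) ((fun y : ℕ → W => (y 0, fun n => y (n + 1))) ⁻¹' E) = _
  rw [← Measure.map_apply (by fun_prop) hE, infinitePi_map_head_tail, Measure.prod_apply hE]
  rfl

end HeadTail

section Trajectory

variable {α W : Type*} {T : α → W → α}

theorem traj_succ' (T : α → W → α) (x : α) (y : ℕ → W) (n : ℕ) :
    traj T x y (n + 1) = traj T (T x (y 0)) (fun k => y (k + 1)) n := by
  induction n with
  | zero => rfl
  | succ n ih => exact congrArg (T · (y (n + 1))) ih

theorem tendsto_traj_iff_tendsto_traj_step [TopologicalSpace α] {x : α} {y : ℕ → W} {a : α} :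
    Tendsto (traj T x y) atTop (𝓝 a) ↔
      Tendsto (traj T (T x (y 0)) (fun k => y (k + 1))) atTop (𝓝 a) := by
  rw [← tendsto_add_atTop_iff_nat 1]
  simp only [traj_succ']

theorem traj_mem_of_mapsTo {X : Set α} (hTX : ∀ x ∈ X, ∀ w, T x w ∈ X) {x : α} (hx : x ∈ X)
    (y : ℕ → W) (n : ℕ) : traj T x y n ∈ X := by
  induction n with
  | zero => exact hx
  | succ n ih => exact hTX _ ih (y n)

variable [MeasurableSpace α] [MeasurableSpace W]

theorem measurable_step (hT : Measurable (Function.uncurry T)) (x : α) : Measurable (T x) :=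
  hT.comp measurable_prodMk_left

theorem measurable_traj (hT : Measurable (Function.uncurry T)) (n : ℕ) :
    Measurable fun p : α × (ℕ → W) => traj T p.1 p.2 n := by
  induction n with
  | zero => exact measurable_fst
  | succ n ih => exact hT.comp (ih.prodMk ((measurable_pi_apply n).comp measurable_snd))

theorem measurable_traj_step (hT : Measurable (Function.uncurry T)) (x : α) (n : ℕ) :
    Measurable fun q : W × (ℕ → W) => traj T (T x q.1) q.2 n :=
  (measurable_traj hT n).comp ((measurable_step hT x).prodMap measurable_id)

end Trajectory

section PerronFrobenius

variable {α W : Type*} [MeasurableSpace α] [MeasurableSpace W] {T : α → W → α}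
  (v : Measure W) {S : Set α}

theorem measurable_map_step [SFinite v] (hT : Measurable (Function.uncurry T)) :
    Measurable fun x => v.map (T x) := by
  refine Measure.measurable_of_measurable_coe _ fun s hs => ?_
  have h : (fun x => v.map (T x) s) = fun x => v (Prod.mk x ⁻¹' (Function.uncurry T ⁻¹' s)) :=
    funext fun x => Measure.map_apply (measurable_step hT x) hs
  exact h ▸ measurable_measure_prodMk_left (hT hs)

theorem lintegral_P1 [SFinite v] (hT : Measurable (Function.uncurry T)) (hS : MeasurableSet S)
    (μ : Measure α) {f : α → ℝ≥0∞} (hf : Measurable f) :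
    ∫⁻ z, f z ∂(P1 T v S μ) = ∫⁻ x in S, ∫⁻ w, S.indicator f (T x w) ∂v ∂μ := by
  rw [P1, ← lintegral_indicator hS,
    Measure.lintegral_bind (measurable_map_step v hT).aemeasurable (hf.indicator hS).aemeasurable]
  exact lintegral_congr fun x => lintegral_map (hf.indicator hS) (measurable_step hT x)

theorem P1_mono [SFinite v] (hT : Measurable (Function.uncurry T)) {μ₁ μ₂ : Measure α}
    (h : μ₁ ≤ μ₂) : P1 T v S μ₁ ≤ P1 T v S μ₂ := by
  refine Measure.restrict_mono subset_rfl (Measure.le_iff.2 fun B hB => ?_)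
  simp only [Measure.bind_apply hB (measurable_map_step v hT).aemeasurable]
  exact lintegral_mono' (Measure.restrict_mono subset_rfl h) le_rfl

theorem P1_smul (c : ℝ≥0∞) (μ : Measure α) : P1 T v S (c • μ) = c • P1 T v S μ := by
  rw [P1, P1, Measure.restrict_smul, Measure.bind_smul, Measure.restrict_smul]

theorem P1_le_smul_of_le_on (hS : MeasurableSet S) {μ : Measure α} {γ : ℝ≥0∞}
    (h : ∀ B, MeasurableSet B → B ⊆ S → P1 T v S μ B ≤ γ * μ B) : P1 T v S μ ≤ γ • μ := by
  refine Measure.le_iff.2 fun B hB => ?_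
  calc P1 T v S μ B = P1 T v S μ (B ∩ S) := by
        rw [P1, Measure.restrict_apply hB, Measure.restrict_apply (hB.inter hS), inter_assoc,
          inter_self]
    _ ≤ γ * μ (B ∩ S) := h _ (hB.inter hS) inter_subset_right
    _ ≤ (γ • μ) B := mul_le_mul_right (measure_mono inter_subset_left) γ

theorem iterate_P1_le_pow_smul [SFinite v] (hT : Measurable (Function.uncurry T)) {μ : Measure α}
    {γ : ℝ≥0∞} (h : P1 T v S μ ≤ γ • μ) (n : ℕ) : (P1 T v S)^[n] μ ≤ γ ^ n • μ := by
  induction n with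
  | zero => simp
  | succ n ih =>
    calc (P1 T v S)^[n + 1] μ = P1 T v S ((P1 T v S)^[n] μ) := Function.iterate_succ_apply' ..
      _ ≤ γ ^ n • P1 T v S μ := (P1_mono v hT ih).trans_eq (P1_smul v _ μ)
      _ ≤ γ ^ (n + 1) • μ := by
        rw [pow_succ, mul_smul]
        exact smul_le_smul_left (γ ^ n) h

end PerronFrobenius

section Sojourn

variable {α W : Type*} [MeasurableSpace W] {T : α → W → α} (v : Measure W) {S : Set α}

def stayProb (T : α → W → α) (v : Measure W) (S : Set α) (n : ℕ) (x : α) : ℝ≥0∞ :=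
  infinitePi (fun _ => v) {y | ∀ k ≤ n, traj T x y k ∈ S}

theorem stayProb_of_notMem {x : α} (hx : x ∉ S) (n : ℕ) : stayProb T v S n x = 0 :=
  measure_mono_null (fun _ hy => hx (hy 0 n.zero_le)) measure_empty

variable [IsProbabilityMeasure v]

theorem stayProb_zero : stayProb T v S 0 = S.indicator 1 := by
  funext x
  by_cases hx : x ∈ S
  · simp [stayProb, hx, traj]
  · rw [stayProb_of_notMem v hx, indicator_of_notMem hx]

variable [MeasurableSpace α]

theorem measurable_stayProb (hT : Measurable (Function.uncurry T)) (hS : MeasurableSet S)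
    (n : ℕ) : Measurable (stayProb T v S n) := by
  refine measurable_measure_prodMk_left
    (s := {p : α × (ℕ → W) | ∀ k ≤ n, traj T p.1 p.2 k ∈ S}) ?_
  simp only [ofPred_forall]
  exact .iInter fun k => .iInter fun _ => measurable_traj hT k hS

theorem stayProb_succ (hT : Measurable (Function.uncurry T)) (hS : MeasurableSet S) (n : ℕ) :
    stayProb T v S (n + 1) = S.indicator fun x => ∫⁻ w, stayProb T v S n (T x w) ∂v := by
  funext x
  by_cases hx : x ∈ S
  · have hE : MeasurableSet {q : W × (ℕ → W) | ∀ k ≤ n, traj T (T x q.1) q.2 k ∈ S} := by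
      simp only [ofPred_forall]
      exact .iInter fun k => .iInter fun _ => measurable_traj_step hT x k hS
    rw [indicator_of_mem hx, stayProb]
    refine Eq.trans ?_ (infinitePi_preimage_head_tail v hE)
    congr 1
    ext y
    simp only [mem_ofPred_eq, ← Nat.lt_succ_iff, Nat.forall_lt_succ_left, ← traj_succ']
    exact and_iff_right hx
  · rw [stayProb_of_notMem v hx, indicator_of_notMem hx]

theorem lintegral_stayProb_succ (hT : Measurable (Function.uncurry T)) (hS : MeasurableSet S)
    (μ : Measure α) (n : ℕ) :
    ∫⁻ x, stayProb T v S (n + 1) x ∂μ = ∫⁻ x, stayProb T v S n x ∂(P1 T v S μ) := by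
  have hsupp : S.indicator (stayProb T v S n) = stayProb T v S n :=
    indicator_eq_self.2 fun x hx => by_contra fun hxS => hx (stayProb_of_notMem v hxS n)
  rw [lintegral_P1 v hT hS μ (measurable_stayProb v hT hS n), hsupp, stayProb_succ v hT hS,
    lintegral_indicator hS]

theorem lintegral_stayProb (hT : Measurable (Function.uncurry T)) (hS : MeasurableSet S)
    (μ : Measure α) (n : ℕ) : ∫⁻ x, stayProb T v S n x ∂μ = (P1 T v S)^[n] μ S := by
  induction n generalizing μ with
  | zero => rw [stayProb_zero, lintegral_indicator_one hS, Function.iterate_zero_apply]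
  | succ n ih =>
    rw [lintegral_stayProb_succ v hT hS, ih, Function.iterate_succ_apply]

end Sojourn

section Convergence

variable {α W : Type*} [MeasurableSpace α] [TopologicalSpace α] [SecondCountableTopology α]
  [TopologicalSpace.PseudoMetrizableSpace α] [OpensMeasurableSpace α] [MeasurableSpace W]
  {T : α → W → α} (v : Measure W) [IsProbabilityMeasure v] {a : α}

theorem measurableSet_tendsto_traj (hT : Measurable (Function.uncurry T)) :
    MeasurableSet {p : α × (ℕ → W) | Tendsto (traj T p.1 p.2) atTop (𝓝 a)} :=
  measurableSet_tendsto_fun (measurable_traj hT) measurable_const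

theorem measurable_infinitePi_not_tendsto (hT : Measurable (Function.uncurry T)) :
    Measurable fun x => infinitePi (fun _ => v) {y | ¬Tendsto (traj T x y) atTop (𝓝 a)} :=
  measurable_measure_prodMk_left (measurableSet_tendsto_traj hT).compl

theorem ae_tendsto_traj_of_traj_mem (hT : Measurable (Function.uncurry T)) {A : Set α}
    (hA : MeasurableSet A)
    (hconv : ∀ x ∈ A, ∀ᵐ y ∂(infinitePi fun _ => v), Tendsto (traj T x y) atTop (𝓝 a))
    (k : ℕ) (x : α) :
    ∀ᵐ y ∂(infinitePi fun _ => v), traj T x y k ∈ A → Tendsto (traj T x y) atTop (𝓝 a) := by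
  induction k generalizing x with
  | zero =>
    by_cases hx : x ∈ A
    · exact (hconv x hx).mono fun _ h _ => h
    · exact .of_forall fun _ h => absurd h hx
  | succ k ih =>
    have hE : MeasurableSet {q : W × (ℕ → W) | ¬(traj T (T x q.1) q.2 k ∈ A →
        Tendsto (traj T (T x q.1) q.2) atTop (𝓝 a))} :=
      (MeasurableSet.imp (measurable_traj_step hT x k hA)
        ((measurable_step hT x).prodMap measurable_id (measurableSet_tendsto_traj hT))).compl
    rw [ae_iff]
    simp only [traj_succ', tendsto_traj_iff_tendsto_traj_step (x := x)]
    exact (infinitePi_preimage_head_tail v hE).trans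
      ((lintegral_congr fun w => ae_iff.1 (ih (T x w))).trans lintegral_zero)

theorem infinitePi_not_tendsto_le_stayProb (hT : Measurable (Function.uncurry T)) {A S X : Set α}
    (hA : MeasurableSet A)
    (hconv : ∀ x ∈ A, ∀ᵐ y ∂(infinitePi fun _ => v), Tendsto (traj T x y) atTop (𝓝 a))
    (hTX : ∀ x ∈ X, ∀ w, T x w ∈ X) (hXSA : X ⊆ S ∪ A) {x : α} (hx : x ∈ X) (n : ℕ) :
    infinitePi (fun _ => v) {y | ¬Tendsto (traj T x y) atTop (𝓝 a)} ≤ stayProb T v S n x := by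
  refine measure_mono_ae ?_
  filter_upwards [ae_all_iff.2 fun k => ae_tendsto_traj_of_traj_mem v hT hA hconv k x]
    with y hy hnot k _
  exact (hXSA (traj_mem_of_mapsTo hTX hx y k)).resolve_right fun hk => hnot (hy k hk)

theorem ae_restrict_infinitePi_not_tendsto_eq_zero (hT : Measurable (Function.uncurry T))
    {A S X : Set α} (hS : MeasurableSet S) (hA : MeasurableSet A)
    (hconv : ∀ x ∈ A, ∀ᵐ y ∂(infinitePi fun _ => v), Tendsto (traj T x y) atTop (𝓝 a))
    (hTX : ∀ x ∈ X, ∀ w, T x w ∈ X) (hXSA : X ⊆ S ∪ A) {μ : Measure α} [IsFiniteMeasure μ]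
    {γ : ℝ≥0∞} (hγ : γ < 1) (hμ : P1 T v S μ ≤ γ • μ) :
    ∀ᵐ x ∂μ.restrict X, infinitePi (fun _ => v) {y | ¬Tendsto (traj T x y) atTop (𝓝 a)} = 0 := by
  have hlim : Tendsto (fun n => γ ^ n * μ S) atTop (𝓝 0) := by
    simpa using ENNReal.Tendsto.mul_const (ENNReal.tendsto_pow_atTop_nhds_zero_of_lt_one hγ)
      (.inr (measure_ne_top μ S))
  refine (lintegral_eq_zero_iff (measurable_infinitePi_not_tendsto v hT)).1
    (le_antisymm (ge_of_tendsto' hlim fun n => ?_) zero_le)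
  calc ∫⁻ x in X, infinitePi (fun _ => v) {y | ¬Tendsto (traj T x y) atTop (𝓝 a)} ∂μ
      ≤ ∫⁻ x in X, stayProb T v S n x ∂μ := setLIntegral_mono (measurable_stayProb v hT hS n)
        fun x hx => infinitePi_not_tendsto_le_stayProb v hT hA hconv hTX hXSA hx n
    _ ≤ ∫⁻ x, stayProb T v S n x ∂μ := setLIntegral_le_lintegral _ _
    _ = (P1 T v S)^[n] μ S := lintegral_stayProb v hT hS μ n
    _ ≤ γ ^ n * μ S := iterate_P1_le_pow_smul v hT hμ n S

end Convergence

theorem ae_almost_sure_stable_of_lyapunov_measure_general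
    {d : ℕ} {Wsp : Type*} [MeasurableSpace Wsp]
    (X : Set (EuclideanSpace ℝ (Fin d))) (hX : IsCompact X)
    (v : Measure Wsp) [IsProbabilityMeasure v]
    (T : EuclideanSpace ℝ (Fin d) → Wsp → EuclideanSpace ℝ (Fin d))
    (hT : Measurable (Function.uncurry T))
    (hTX : ∀ x ∈ X, ∀ y, T x y ∈ X)
    -- the infinite product measure `v^∞` on `W^ℕ`
    (vInf : Measure (ℕ → Wsp))
    (hvInf : ∀ (n : ℕ) (f : Fin n → Set Wsp), (∀ i, MeasurableSet (f i)) →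
      vInf {y : ℕ → Wsp | ∀ i : Fin n, y (i : ℕ) ∈ f i} = ∏ i, v (f i))
    -- local stability assumption
    (O : Set (EuclideanSpace ℝ (Fin d)))
    (hstab : ∀ x₀ ∈ O, ∀ᵐ y ∂vInf,
      (∀ n : ℕ, traj T x₀ y n ∈ O) ∧ Tendsto (traj T x₀ y) atTop (nhds 0))
    -- a Lyapunov measure `μ̄` with rate `γ < 1` on `X \ U(ε)`, `U(ε) ⊆ O`
    (ε : ℝ) (hUO : X ∩ ball 0 ε ⊆ O)
    (γ : ENNReal) (hγ1 : γ < 1)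
    (μbar : Measure (EuclideanSpace ℝ (Fin d))) [IsFiniteMeasure μbar]
    (hlyap : ∀ B : Set (EuclideanSpace ℝ (Fin d)), MeasurableSet B → B ⊆ X \ ball 0 ε →
      P1 T v (X \ ball 0 ε) μbar B ≤ γ * μbar B)
    -- a finite measure `m` absolutely continuous w.r.t. `μ̄` on `X \ U(ε)`
    (m : Measure (EuclideanSpace ℝ (Fin d))) (hmX : m Xᶜ = 0)
    (hac : ∀ B : Set (EuclideanSpace ℝ (Fin d)), MeasurableSet B → B ⊆ X \ ball 0 ε →
      μbar B = 0 → m B = 0) :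
    -- conclusion: `x = 0` is a.e. almost surely stable w.r.t. `m`
    ∀ δ : ENNReal, 0 < δ →
      m {x : EuclideanSpace ℝ (Fin d) |
          δ ≤ vInf {y : ℕ → Wsp | ¬ Tendsto (traj T x y) atTop (nhds 0)}} = 0 := by
  intro δ hδ
  obtain rfl := eq_infinitePi_of_prefix v hvInf
  set S := X \ ball 0 ε
  set F := fun x => infinitePi (fun _ => v) {y | ¬Tendsto (traj T x y) atTop (𝓝 0)}
  have hXm : MeasurableSet X := hX.isClosed.measurableSet
  have hS : MeasurableSet S := hXm.diff measurableSet_ball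
  have hconv : ∀ x ∈ X ∩ ball 0 ε, ∀ᵐ y ∂(infinitePi fun _ => v),
      Tendsto (traj T x y) atTop (𝓝 0) :=
    fun x hx => (hstab x (hUO hx)).mono fun _ h => h.2
  have hFX : ∀ᵐ x ∂μbar, x ∈ X → F x = 0 := (ae_restrict_iff' hXm).1 <|
    ae_restrict_infinitePi_not_tendsto_eq_zero v hT hS (hXm.inter measurableSet_ball) hconv hTX
      (sdiff_union_inter X (ball 0 ε)).ge hγ1 (P1_le_smul_of_le_on v hS hlyap)
  have hbad : μbar ({x | δ ≤ F x} ∩ S) = 0 := by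
    refine measure_mono_null ?_ (ae_iff.1 hFX)
    intro x hx hFx
    exact hδ.ne' (le_antisymm (hx.1.trans_eq (hFx hx.2.1)) zero_le)
  refine measure_mono_null (fun x hx => ?_) (measure_union_null (hac _
    ((measurableSet_le measurable_const (measurable_infinitePi_not_tendsto v hT)).inter hS)
    inter_subset_right hbad) hmX)
  by_cases hxX : x ∈ X
  · refine .inl ⟨hx, hxX, fun hxε => hδ.ne' (le_antisymm ?_ zero_le)⟩
    exact hx.trans_eq (ae_iff.1 (hconv x ⟨hxX, hxε⟩))
  · exact .inr hxX

/-- under the equilibrium and local stability assumption, if there are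
`ε > 0` with `U(ε) ⊆ O`, `γ ∈ (0,1)` and a Lyapunov measure `μ̄` on `X \ U(ε)` (a finite
positive measure with `[P₁ μ̄](B) ≤ γ μ̄(B)` for all Borel `B ⊆ X \ U(ε)`), then `x = 0`
is a.e. almost surely stable with respect to every finite measure `m` absolutely continuous
with respect to `μ̄` on `X \ U(ε)`. -/
theorem ae_almost_sure_stable_of_lyapunov_measure
    {d : ℕ} {Wsp : Type*} [MeasurableSpace Wsp]
    (X : Set (EuclideanSpace ℝ (Fin d))) (hX : IsCompact X)
    (v : Measure Wsp) [IsProbabilityMeasure v]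
    (T : EuclideanSpace ℝ (Fin d) → Wsp → EuclideanSpace ℝ (Fin d))
    (hT : Measurable (Function.uncurry T))
    (hTcont : ∀ y : Wsp, Continuous fun x => T x y)
    (hTX : ∀ x ∈ X, ∀ y, T x y ∈ X)
    (heq : ∀ y : Wsp, T 0 y = 0)
    -- the infinite product measure `v^∞` on `W^ℕ`
    (vInf : Measure (ℕ → Wsp)) [IsProbabilityMeasure vInf]
    (hvInf : ∀ (n : ℕ) (f : Fin n → Set Wsp), (∀ i, MeasurableSet (f i)) →
      vInf {y : ℕ → Wsp | ∀ i : Fin n, y (i : ℕ) ∈ f i} = ∏ i, v (f i))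
    -- local stability assumption
    (O : Set (EuclideanSpace ℝ (Fin d))) (hO : O ∈ nhdsWithin 0 X) (hOX : O ⊆ X)
    (hstab : ∀ x₀ ∈ O, ∀ᵐ y ∂vInf,
      (∀ n : ℕ, traj T x₀ y n ∈ O) ∧ Tendsto (traj T x₀ y) atTop (nhds 0))
    -- a Lyapunov measure `μ̄` with rate `γ < 1` on `X \ U(ε)`, `U(ε) ⊆ O`
    (ε : ℝ) (hε : 0 < ε) (hUO : X ∩ ball 0 ε ⊆ O)
    (γ : ENNReal) (hγ0 : 0 < γ) (hγ1 : γ < 1)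
    (μbar : Measure (EuclideanSpace ℝ (Fin d))) [IsFiniteMeasure μbar]
    (hsupp : μbar (X \ ball 0 ε)ᶜ = 0)
    (hlyap : ∀ B : Set (EuclideanSpace ℝ (Fin d)), MeasurableSet B → B ⊆ X \ ball 0 ε →
      P1 T v (X \ ball 0 ε) μbar B ≤ γ * μbar B)
    -- a finite measure `m` absolutely continuous w.r.t. `μ̄` on `X \ U(ε)`
    (m : Measure (EuclideanSpace ℝ (Fin d))) [IsFiniteMeasure m] (hmX : m Xᶜ = 0)
    (hac : ∀ B : Set (EuclideanSpace ℝ (Fin d)), MeasurableSet B → B ⊆ X \ ball 0 ε →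
      μbar B = 0 → m B = 0) :
    -- conclusion: `x = 0` is a.e. almost surely stable w.r.t. `m`
    ∀ δ : ENNReal, 0 < δ →
      m {x : EuclideanSpace ℝ (Fin d) |
          δ ≤ vInf {y : ℕ → Wsp | ¬ Tendsto (traj T x y) atTop (nhds 0)}} = 0 :=
  ae_almost_sure_stable_of_lyapunov_measure_general X hX v T hT hTX vInf hvInf O hstab ε hUO γ hγ1
    μbar hlyap m hmX hac
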